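/- arXiv:1604.01550 — 8 statements merged into one kernel-verified Lean document; each statement's English description precedes it below -/
import Mathlib

section
/- (Claim from Theorem 'RCP is FPT parameterized by (p, min{s,d})'.) Let UR ⊆ U × R, P ⊆ R, and for C ⊆ P let U_C = {u ∈ U : N(u) = C}. Suppose S ⊆ U is a minimal blocker set for res(P,0,d,t), i.e., S intersects the union of every set of teams, but no proper subset of S has this property. Then for every C ⊆ P, if U_C ∩ S ≠ ∅ then |U_C ∖ S| < d. -/
/-!
Suppose `u ∈ U_C ∩ S` but at least `d` users of `U_C` lie outside `S`. By minimality, some set of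
teams `V` meets `S` only in `u`, and since `S` blocks, `u` sits in some team `V i`. Replacing `u`
by a user `w ∈ U_C \ S` that belongs to no other team keeps all team conditions, and the new teams
avoid `S`, a contradiction. Such a `w` exists: if all of the at least `d` candidates lay in the
`d - 1` other teams, two of them would share a team, and one of them can be dropped from it
because both have the same neighbourhood.
-/

/-- Neighborhood of a set of users under an authorization policy. -/
def nbhd {U R : Type*} [DecidableEq U] [DecidableEq R]
    (UR : Finset (U × R)) (V : Finset U) : Finset R :=
  (UR.filter (fun p => p.1 ∈ V)).image Prod.snd

/-- `S` is a blocker set: it intersects the union of every set of teams. -/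
def isBlocker {U R : Type*} [Fintype U] [DecidableEq U] [DecidableEq R]
    (UR : Finset (U × R)) (P : Finset R) (d t : ℕ) (S : Finset U) : Prop :=
  ∀ V : Fin d → Finset U,
    (∀ i j, i ≠ j → Disjoint (V i) (V j)) →
    (∀ i, (V i).card ≤ t) →
    (∀ i, P ⊆ nbhd UR (V i)) →
    ((Finset.univ.biUnion V) ∩ S).Nonempty

open Finset Function

section Teams

variable {U R : Type*} [DecidableEq U] [DecidableEq R] {UR : Finset (U × R)}

lemma nbhd_union (A B : Finset U) : nbhd UR (A ∪ B) = nbhd UR A ∪ nbhd UR B := by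
  simp only [nbhd, mem_union, filter_or, image_union]

lemma nbhd_insert (u : U) (A : Finset U) : nbhd UR (insert u A) = nbhd UR {u} ∪ nbhd UR A := by
  rw [insert_eq, nbhd_union]

def IsTeams (UR : Finset (U × R)) (P : Finset R) {d : ℕ} (t : ℕ) (V : Fin d → Finset U) : Prop :=
  Pairwise (Disjoint on V) ∧ (∀ i, #(V i) ≤ t) ∧ ∀ i, P ⊆ nbhd UR (V i)

lemma not_isBlocker_iff [Fintype U] {P : Finset R} {d t : ℕ} {S : Finset U} :
    ¬ isBlocker UR P d t S ↔
      ∃ V : Fin d → Finset U, IsTeams UR P t V ∧ Disjoint (univ.biUnion V) S := by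
  simp only [isBlocker, IsTeams, not_forall, ← not_disjoint_iff_nonempty_inter, not_not,
    exists_prop, and_assoc]
  rfl

def exchange {d : ℕ} (V : Fin d → Finset U) (i : Fin d) (u w : U) : Fin d → Finset U :=
  update V i (insert w ((V i).erase u))

variable {d : ℕ} {V : Fin d → Finset U} {i j : Fin d} {u w : U}

lemma exchange_self : exchange V i u w i = insert w ((V i).erase u) :=
  update_self _ _ _

lemma exchange_of_ne (h : j ≠ i) : exchange V i u w j = V j :=
  update_of_ne h _ _

lemma IsTeams.exchange {P : Finset R} {t : ℕ} (hV : IsTeams UR P t V) (hu : u ∈ V i)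
    (huw : nbhd UR {u} ⊆ nbhd UR {w}) (hw : ∀ j ≠ i, w ∉ V j) :
    IsTeams UR P t (exchange V i u w) := by
  obtain ⟨hdisj, hcard, hcov⟩ := hV
  have hdisj_i : ∀ j ≠ i, Disjoint (insert w ((V i).erase u)) (V j) := fun j hj =>
    disjoint_insert_left.2 ⟨hw j hj, (hdisj hj.symm).mono_left (erase_subset _ _)⟩
  refine ⟨fun a b hab => ?_, fun a => ?_, fun a => ?_⟩
  · rcases eq_or_ne a i with rfl | ha
    · simpa [onFun, exchange_self, exchange_of_ne hab.symm] using hdisj_i b hab.symm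
    rcases eq_or_ne b i with rfl | hb
    · simpa [onFun, exchange_self, exchange_of_ne ha] using (hdisj_i a ha).symm
    simpa [onFun, exchange_of_ne ha, exchange_of_ne hb] using hdisj hab
  · rcases eq_or_ne a i with rfl | ha
    · calc #(exchange V a u w a) ≤ #((V a).erase u) + 1 := by
            rw [exchange_self]; exact card_insert_le _ _
        _ = #(V a) := card_erase_add_one hu
        _ ≤ t := hcard a
    · rw [exchange_of_ne ha]; exact hcard a
  · rcases eq_or_ne a i with rfl | ha
    · calc P ⊆ nbhd UR (V a) := hcov a
        _ = nbhd UR {u} ∪ nbhd UR ((V a).erase u) := by rw [← nbhd_insert, insert_erase hu]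
        _ ⊆ nbhd UR {w} ∪ nbhd UR ((V a).erase u) := union_subset_union huw subset_rfl
        _ = nbhd UR (exchange V a u w a) := by rw [exchange_self, nbhd_insert]
    · rw [exchange_of_ne ha]; exact hcov a

lemma biUnion_exchange_subset [Fintype U] (hV : Pairwise (Disjoint on V)) (hu : u ∈ V i) :
    univ.biUnion (exchange V i u w) ⊆ insert w ((univ.biUnion V).erase u) := by
  intro x hx
  obtain ⟨k, -, hxk⟩ := mem_biUnion.1 hx
  rcases eq_or_ne k i with rfl | hk
  · rw [exchange_self] at hxk
    exact insert_subset_insert _ (erase_subset_erase _ (subset_biUnion_of_mem V (mem_univ k))) hxk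
  · rw [exchange_of_ne hk] at hxk
    have hxu : x ≠ u := fun h => disjoint_left.1 (hV hk) hxk (h ▸ hu)
    exact mem_insert_of_mem (mem_erase.2 ⟨hxu, mem_biUnion.2 ⟨k, mem_univ k, hxk⟩⟩)

lemma exists_isTeams_with_free_member {P : Finset R} {t : ℕ} {C : Finset R}
    (hV : IsTeams UR P t V) (i : Fin d) {W : Finset U} (hW : d ≤ #W)
    (hC : ∀ w ∈ W, nbhd UR {w} = C) :
    ∃ V', IsTeams UR P t V' ∧ (∀ k, V' k ⊆ V k) ∧ V' i = V i ∧ ∃ w ∈ W, ∀ j ≠ i, w ∉ V' j := by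
  by_cases hfree : ∃ w ∈ W, ∀ j ≠ i, w ∉ V j
  · exact ⟨V, hV, fun _ => subset_rfl, rfl, hfree⟩
  push Not at hfree
  have : Nonempty (Fin d) := ⟨i⟩
  choose! f hfi hfV using hfree
  obtain ⟨w₁, hw₁, w₂, hw₂, hne, hf⟩ : ∃ w₁ ∈ W, ∃ w₂ ∈ W, w₁ ≠ w₂ ∧ f w₁ = f w₂ := by
    refine exists_ne_map_eq_of_card_lt_of_maps_to (t := univ.erase i) ?_
      fun w hw => mem_erase.2 ⟨hfi w hw, mem_univ _⟩
    rw [card_erase_of_mem (mem_univ i), card_univ, Fintype.card_fin]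
    have : 0 < d := i.pos
    omega
  set j := f w₁
  have hji : j ≠ i := hfi w₁ hw₁
  have hw₁j : w₁ ∈ V j := hfV w₁ hw₁
  have hw₂j : w₂ ∈ V j := hf ▸ hfV w₂ hw₂
  have hsub : ∀ k, exchange V j w₁ w₂ k ⊆ V k := fun k => by
    rcases eq_or_ne k j with rfl | hk
    · rw [exchange_self]; exact insert_subset hw₂j (erase_subset _ _)
    · rw [exchange_of_ne hk]
  refine ⟨exchange V j w₁ w₂, ?_, hsub, exchange_of_ne hji.symm, w₁, hw₁, fun k hk => ?_⟩
  · refine hV.exchange hw₁j (by rw [hC w₁ hw₁, hC w₂ hw₂]) fun k hk h => ?_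
    exact disjoint_left.1 (hV.1 hk) h hw₂j
  · rcases eq_or_ne k j with rfl | hkj
    · rw [exchange_self]; simp [hne]
    · exact fun h => disjoint_left.1 (hV.1 hkj) (hsub k h) hw₁j

end Teams

theorem minimal_blocker_claim_general {U R : Type*} [Fintype U] [DecidableEq U] [DecidableEq R]
    (UR : Finset (U × R)) (P : Finset R) (d t : ℕ)
    (S : Finset U)
    (hS : isBlocker UR P d t S)
    (hmin : ∀ S' ⊂ S, ¬ isBlocker UR P d t S')
    (C : Finset R)
    (hint : ((Finset.univ.filter (fun u => nbhd UR {u} = C)) ∩ S).Nonempty) :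
    ((Finset.univ.filter (fun u => nbhd UR {u} = C)) \ S).card < d := by
  by_contra! hcard
  obtain ⟨u, huCS⟩ := hint
  obtain ⟨huC, huS⟩ := mem_inter.1 huCS
  obtain ⟨V, hV, hVS⟩ := not_isBlocker_iff.1 (hmin _ (erase_ssubset huS))
  have hVS' : Disjoint ((univ.biUnion V).erase u) S := disjoint_erase_comm.2 hVS
  obtain ⟨i, -, hui⟩ : ∃ i ∈ univ, u ∈ V i := by
    rw [← mem_biUnion]
    by_contra hu
    exact not_isBlocker_iff.2 ⟨V, hV, erase_eq_of_notMem hu ▸ hVS'⟩ hS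
  obtain ⟨V', hV', hV'V, hV'i, w, hw, hwfree⟩ :=
    exists_isTeams_with_free_member hV i hcard fun w hw => (mem_filter.1 (mem_sdiff.1 hw).1).2
  obtain ⟨hwC, hwS⟩ := mem_sdiff.1 hw
  have hui' : u ∈ V' i := hV'i ▸ hui
  have huw : nbhd UR {u} = nbhd UR {w} := by rw [(mem_filter.1 huC).2, (mem_filter.1 hwC).2]
  have hV'S : Disjoint (univ.biUnion (exchange V' i u w)) S := by
    refine (disjoint_insert_left.2 ⟨hwS, hVS'.mono_left ?_⟩).mono_left
      (biUnion_exchange_subset hV'.1 hui')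
    exact erase_subset_erase _ (biUnion_mono fun k _ => hV'V k)
  exact not_isBlocker_iff.2 ⟨_, hV'.exchange hui' huw.subset hwfree, hV'S⟩ hS

/-- Claim: for a minimal blocker set `S`, for every `C ⊆ P`, if `U_C ∩ S ≠ ∅`
then `|U_C ∖ S| < d`, where `U_C` is the set of users with neighborhood `C`. -/
theorem minimal_blocker_claim {U R : Type*} [Fintype U] [DecidableEq U] [DecidableEq R]
    (UR : Finset (U × R)) (P : Finset R) (d t : ℕ) (hd : 1 ≤ d) (ht : 1 ≤ t)
    (S : Finset U)
    (hS : isBlocker UR P d t S)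
    (hmin : ∀ S' ⊂ S, ¬ isBlocker UR P d t S')
    (C : Finset R) (hC : C ⊆ P)
    (hint : ((Finset.univ.filter (fun u => nbhd UR {u} = C)) ∩ S).Nonempty) :
    ((Finset.univ.filter (fun u => nbhd UR {u} = C)) \ S).card < d :=
  minimal_blocker_claim_general UR P d t S hS hmin C hint
end

section
/- (Safeness of Reduction Rule 2, forward direction.) Let UR ⊆ U × R, P ⊆ R, d ≥ 1, X ⊆ P and Y ⊆ U with N(Y) ⊆ X. If there exist d pairwise disjoint sets V₁,…,V_d ⊆ U with N(Vᵢ) ⊇ P, then in the reduced instance (users U∖Y, resources P∖X, policy UR restricted accordingly) there exist d pairwise disjoint sets V₁∖Y,…,V_d∖Y with neighborhoods containing P∖X. -/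
/-- Safeness of Reduction Rule 2, forward direction: if teams cover `P`, then the
teams with `Y` removed cover `P ∖ X` in the reduced instance. -/
theorem rule2_safe_forward {U R : Type*} [DecidableEq U] [DecidableEq R]
    (UR : Finset (U × R)) (P : Finset R) (d : ℕ) (hd : 1 ≤ d)
    (X : Finset R) (Y : Finset U) (hX : X ⊆ P) (hNY : nbhd UR Y ⊆ X)
    (V : Fin d → Finset U)
    (hdisj : ∀ i j, i ≠ j → Disjoint (V i) (V j))
    (hcov : ∀ i, P ⊆ nbhd UR (V i)) :
    (∀ i j, i ≠ j → Disjoint (V i \ Y) (V j \ Y)) ∧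
    (∀ i, P \ X ⊆ nbhd (UR.filter (fun p => p.1 ∉ Y)) (V i \ Y)) := by
  constructor
  · intro i j hij
    exact (hdisj i j hij).mono (Finset.sdiff_subset) (Finset.sdiff_subset)
  · intro i r hr
    rw [Finset.mem_sdiff] at hr
    obtain ⟨hrP, hrX⟩ := hr
    have := hcov i hrP
    simp only [nbhd, Finset.mem_image, Finset.mem_filter] at this ⊢
    obtain ⟨⟨u, r'⟩, ⟨hUR, hu⟩, hr'⟩ := this
    have huY : u ∉ Y := by
      intro hY
      refine hrX (hNY ?_)
      simp only [nbhd, Finset.mem_image, Finset.mem_filter]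
      exact ⟨(u, r'), ⟨hUR, hY⟩, hr'⟩
    exact ⟨(u, r'), ⟨⟨hUR, huY⟩, Finset.mem_sdiff.mpr ⟨hu, huY⟩⟩, hr'⟩
end

section
/- (Safeness of Reduction Rule 2, backward direction.) Let UR ⊆ U × R, P ⊆ R, d ≥ 1, X ⊆ P and Y ⊆ U with N(Y) ⊆ X. Suppose there is a d-expansion of X into Y: for every r ∈ X there exist d distinct users u₁ʳ,…,u_dʳ ∈ Y with (uᵢʳ, r) ∈ UR, such that uᵢʳ ≠ u_{i'}^{r'} whenever (i,r) ≠ (i',r'). If there exist d pairwise disjoint sets V₁,…,V_d ⊆ U∖Y with N(Vᵢ) ⊇ P∖X, then setting Vᵢ' = Vᵢ ∪ {uᵢʳ : r ∈ X}, the sets V₁',…,V_d' are pairwise disjoint and satisfy N(Vᵢ') ⊇ P for all i. -/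
lemma mem_nbhd {U R : Type*} [DecidableEq U] [DecidableEq R]
    (UR : Finset (U × R)) (V : Finset U) (r : R) :
    r ∈ nbhd UR V ↔ ∃ u ∈ V, (u, r) ∈ UR := by
  simp only [nbhd, Finset.mem_image, Finset.mem_filter, Prod.exists]
  constructor
  · rintro ⟨u, r', ⟨h1, h2⟩, rfl⟩
    exact ⟨u, h2, h1⟩
  · rintro ⟨u, hu, hur⟩
    exact ⟨u, r, ⟨hur, hu⟩, rfl⟩

/-- Safeness of Reduction Rule 2, backward direction: given a `d`-expansion of `X`
into `Y` and teams of `U ∖ Y` covering `P ∖ X`, adding the expansion users gives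
pairwise disjoint teams covering `P`. -/
theorem rule2_safe_backward {U R : Type*} [DecidableEq U] [DecidableEq R]
    (UR : Finset (U × R)) (P : Finset R) (d : ℕ) (hd : 1 ≤ d)
    (X : Finset R) (Y : Finset U) (hX : X ⊆ P) (hNY : nbhd UR Y ⊆ X)
    (f : R → Fin d → U)
    (hfY : ∀ r ∈ X, ∀ i : Fin d, f r i ∈ Y ∧ (f r i, r) ∈ UR)
    (hfinj : ∀ r ∈ X, ∀ r' ∈ X, ∀ i i' : Fin d, (i, r) ≠ (i', r') → f r i ≠ f r' i')
    (V : Fin d → Finset U)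
    (hdisj : ∀ i j, i ≠ j → Disjoint (V i) (V j))
    (hVY : ∀ i, Disjoint (V i) Y)
    (hcov : ∀ i, P \ X ⊆ nbhd (UR.filter (fun p => p.1 ∉ Y)) (V i)) :
    (∀ i j, i ≠ j →
        Disjoint (V i ∪ X.image (fun r => f r i)) (V j ∪ X.image (fun r => f r j))) ∧
    (∀ i, P ⊆ nbhd UR (V i ∪ X.image (fun r => f r i))) := by
  constructor
  · intro i j hij
    rw [Finset.disjoint_left]
    intro u hu hu'
    simp only [Finset.mem_union, Finset.mem_image] at hu hu'
    rcases hu with hu | ⟨r, hr, rfl⟩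
    · rcases hu' with hu' | ⟨r, hr, heq⟩
      · exact (Finset.disjoint_left.mp (hdisj i j hij)) hu hu'
      · exact (Finset.disjoint_left.mp (hVY i)) hu (heq ▸ (hfY r hr j).1)
    · rcases hu' with hu' | ⟨r', hr', heq⟩
      · exact (Finset.disjoint_left.mp (hVY j)) hu' ((hfY r hr i).1)
      · exact hfinj r' hr' r hr j i (by simp [hij.symm]) heq
  · intro i r hr
    rw [mem_nbhd]
    by_cases hrX : r ∈ X
    · exact ⟨f r i, Finset.mem_union_right _ (Finset.mem_image_of_mem _ hrX),
        (hfY r hrX i).2⟩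
    · have := hcov i (Finset.mem_sdiff.mpr ⟨hr, hrX⟩)
      rw [mem_nbhd] at this
      obtain ⟨u, hu, hur⟩ := this
      exact ⟨u, Finset.mem_union_left _ hu, (Finset.mem_filter.mp hur).1⟩
end

section
/- (Correctness of the 3-Dimensional Matching reduction, one structural lemma.) In the instance constructed from a 3DM instance (X, Y, Z, M) with |X|=|Y|=|Z|=n and |M|=m: any set V ⊆ U of size at most 4 with N(V) = P must contain exactly one user from each of U_X, U_Y, U_Z, U_* ; moreover if V = {u^X_{i₁}, u^Y_{i₂}, u^Z_{i₃}, u^*_{i₄}} then the hyperedge e_{i₄} equals (x_{i₁}, y_{i₂}, z_{i₃}). -/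
/-- Users of the 3DM reduction: `inl (ω, i)` is `u^ω_i` for `ω ∈ {X, Y, Z}`,
`inr j` is `u^*_j`. -/
abbrev Usr3DM (n m : ℕ) := (Fin 3 × Fin n) ⊕ Fin m

/-- Resources of the 3DM reduction: `inl (ω, j)` is `r^ω_j`;
`inr (inl ω)` is `r_ω`; `inr (inr ())` is `r_*`. -/
abbrev Res3DM (m : ℕ) := (Fin 3 × Fin m) ⊕ (Fin 3 ⊕ Unit)

/-- The `ω`-th component of a hyperedge. -/
def comp3 {n : ℕ} (ω : Fin 3) (e : Fin n × Fin n × Fin n) : Fin n :=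
  if ω = 0 then e.1 else if ω = 1 then e.2.1 else e.2.2

/-- The authorization policy of the 3DM reduction. -/
def auth3DM {n m : ℕ} (e : Fin m → Fin n × Fin n × Fin n) :
    Usr3DM n m → Res3DM m → Prop
  | .inl (ω, i), .inl (ω', j) => ω = ω' ∧ comp3 ω (e j) = i
  | .inl (ω, _), .inr (.inl ω') => ω = ω'
  | .inl _, .inr (.inr _) => False
  | .inr j, .inl (_, h) => h ≠ j
  | .inr _, .inr (.inl _) => False
  | .inr _, .inr (.inr _) => True

/-- Structural lemma of the 3DM reduction: any set of at most 4 users covering all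
resources is `{u^X_{i₁}, u^Y_{i₂}, u^Z_{i₃}, u^*_{i₄}}` with `e_{i₄} = (x_{i₁}, y_{i₂}, z_{i₃})`. -/
theorem threeDM_team_structure {n m : ℕ} (e : Fin m → Fin n × Fin n × Fin n)
    (V : Finset (Usr3DM n m)) (hcard : V.card ≤ 4)
    (hcov : ∀ r : Res3DM m, ∃ u ∈ V, auth3DM e u r) :
    ∃ (i₁ i₂ i₃ : Fin n) (i₄ : Fin m),
      V = {Sum.inl (0, i₁), Sum.inl (1, i₂), Sum.inl (2, i₃), Sum.inr i₄} ∧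
      e i₄ = (i₁, i₂, i₃) := by
  obtain ⟨u₄, hu₄, ha₄⟩ := hcov (.inr (.inr ()))
  obtain ⟨i₄, rfl⟩ : ∃ j, u₄ = Sum.inr j := by
    rcases u₄ with ⟨ω', i⟩ | j
    · exact absurd ha₄ (by simp [auth3DM])
    · exact ⟨j, rfl⟩
  have key : ∀ ω : Fin 3, ∃ i, Sum.inl (ω, i) ∈ V := by
    intro ω
    obtain ⟨u, hu, ha⟩ := hcov (.inr (.inl ω))
    rcases u with ⟨ω', i⟩ | j
    · have h : ω' = ω := ha
      exact ⟨i, h ▸ hu⟩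
    · exact absurd ha (by simp [auth3DM])
  obtain ⟨i₁, h1⟩ := key 0
  obtain ⟨i₂, h2⟩ := key 1
  obtain ⟨i₃, h3⟩ := key 2
  set S : Finset (Usr3DM n m) :=
    {Sum.inl (0, i₁), Sum.inl (1, i₂), Sum.inl (2, i₃), Sum.inr i₄} with hS
  have hsub : S ⊆ V := by
    intro x hx
    simp only [hS, Finset.mem_insert, Finset.mem_singleton] at hx
    rcases hx with rfl | rfl | rfl | rfl <;> assumption
  have hScard : S.card = 4 := by
    rw [hS]
    rw [Finset.card_insert_of_notMem (by simp),
        Finset.card_insert_of_notMem (by simp),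
        Finset.card_insert_of_notMem (by simp), Finset.card_singleton]
  have hV : V = S :=
    (Finset.eq_of_subset_of_card_le hsub (hcard.trans_eq hScard.symm)).symm
  have comp : ∀ ω : Fin 3, ∀ i : Fin n, Sum.inl (ω, i) ∈ V →
      comp3 ω (e i₄) = i → True := fun _ _ _ _ => trivial
  have hc : ∀ ω : Fin 3, ∃ i, Sum.inl (ω, i) ∈ V ∧ comp3 ω (e i₄) = i := by
    intro ω
    obtain ⟨u, hu, ha⟩ := hcov (.inl (ω, i₄))
    rcases u with ⟨ω', i⟩ | j
    · obtain ⟨h, h'⟩ := ha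
      subst h
      exact ⟨i, hu, h'⟩
    · have hji : i₄ ≠ j := ha
      rw [hV, hS] at hu
      simp only [Finset.mem_insert, Finset.mem_singleton] at hu
      rcases hu with h | h | h | h
      · cases h
      · cases h
      · cases h
      · injection h with h; exact absurd h.symm hji
  have c1 : comp3 0 (e i₄) = i₁ := by
    obtain ⟨i, hi, hc⟩ := hc 0
    rw [hV, hS] at hi
    simp only [Finset.mem_insert, Finset.mem_singleton] at hi
    rcases hi with h | h | h | h <;> first
      | (injection h with h; injection h with h h'; subst h'; exact hc)
      | exact absurd (congrArg (fun u => match u with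
          | Sum.inl (ω, _) => ω | Sum.inr _ => 0) h) (by decide)
      | cases h
  have c2 : comp3 1 (e i₄) = i₂ := by
    obtain ⟨i, hi, hc⟩ := hc 1
    rw [hV, hS] at hi
    simp only [Finset.mem_insert, Finset.mem_singleton] at hi
    rcases hi with h | h | h | h <;> first
      | (injection h with h; injection h with h h'; subst h'; exact hc)
      | exact absurd (congrArg (fun u => match u with
          | Sum.inl (ω, _) => ω | Sum.inr _ => 0) h) (by decide)
      | cases h
  have c3 : comp3 2 (e i₄) = i₃ := by
    obtain ⟨i, hi, hc⟩ := hc 2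
    rw [hV, hS] at hi
    simp only [Finset.mem_insert, Finset.mem_singleton] at hi
    rcases hi with h | h | h | h <;> first
      | (injection h with h; injection h with h h'; subst h'; exact hc)
      | exact absurd (congrArg (fun u => match u with
          | Sum.inl (ω, _) => ω | Sum.inr _ => 0) h) (by decide)
      | cases h
  refine ⟨i₁, i₂, i₃, i₄, hV, ?_⟩
  simp only [comp3, show (0:Fin 3) ≠ 1 by decide, show (1:Fin 3) ≠ 0 by decide,
    show (2:Fin 3) ≠ 0 by decide, show (2:Fin 3) ≠ 1 by decide,
    if_true, if_pos rfl, if_neg] at c1 c2 c3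
  exact Prod.ext c1 (Prod.ext c2 c3)
end

section
/- (Correctness of the 3DM reduction, full equivalence.) Let (X, Y, Z, M, k) be a 3-Dimensional Matching instance with |X|=|Y|=|Z|=n, M ⊆ X×Y×Z, |M|=m. There exist k pairwise disjoint hyperedges in M if and only if in the constructed RCP⟨s=0, t=4⟩ instance there exist k pairwise disjoint subsets V₁,…,V_k of U, each of size at most 4, with N(Vᵢ) = P for all i. -/
lemma card4_le {α : Type*} [DecidableEq α] (a b c d : α) :
    ({a, b, c, d} : Finset α).card ≤ 4 := by
  apply le_trans (Finset.card_insert_le _ _)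
  apply Nat.succ_le_succ
  apply le_trans (Finset.card_insert_le _ _)
  apply Nat.succ_le_succ
  apply le_trans (Finset.card_insert_le _ _)
  simp

/-- Correctness of the 3DM reduction: there are `k` pairwise disjoint hyperedges
iff the constructed `RCP⟨s=0, t=4⟩` instance has `k` pairwise disjoint teams of
size at most 4 each covering all resources. -/
theorem threeDM_reduction_correct {n m k : ℕ} (e : Fin m → Fin n × Fin n × Fin n) :
    (∃ f : Fin k → Fin m, ∀ i j, i ≠ j →
        (e (f i)).1 ≠ (e (f j)).1 ∧
        (e (f i)).2.1 ≠ (e (f j)).2.1 ∧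
        (e (f i)).2.2 ≠ (e (f j)).2.2)
    ↔ (∃ V : Fin k → Finset (Usr3DM n m),
        (∀ i j, i ≠ j → Disjoint (V i) (V j)) ∧
        (∀ i, (V i).card ≤ 4) ∧
        (∀ i, ∀ r : Res3DM m, ∃ u ∈ V i, auth3DM e u r)) := by
  constructor
  · rintro ⟨f, hf⟩
    refine ⟨fun i => {Sum.inl (0, (e (f i)).1), Sum.inl (1, (e (f i)).2.1),
      Sum.inl (2, (e (f i)).2.2), Sum.inr (f i)}, ?_, ?_, ?_⟩
    · intro i j hij
      have h := hf i j hij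
      have hfij : f i ≠ f j := fun hh => h.1 (by rw [hh])
      rw [Finset.disjoint_left]
      intro a ha hb
      simp only [Finset.mem_insert, Finset.mem_singleton] at ha hb
      rcases ha with h1|h1|h1|h1 <;> subst h1 <;>
        rcases hb with h2|h2|h2|h2 <;> simp_all [Fin.ext_iff]
    · intro i
      exact card4_le _ _ _ _
    · intro i r
      rcases r with ⟨ω, j⟩ | ω | u
      · by_cases hj : j = f i
        · subst hj
          fin_cases ω
          · exact ⟨Sum.inl (0, (e (f i)).1), by simp, by simp [auth3DM, comp3]⟩
          · exact ⟨Sum.inl (1, (e (f i)).2.1), by simp, by simp [auth3DM, comp3]⟩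
          · exact ⟨Sum.inl (2, (e (f i)).2.2), by simp, by simp [auth3DM, comp3]⟩
        · exact ⟨Sum.inr (f i), by simp, hj⟩
      · fin_cases ω
        · exact ⟨Sum.inl (0, (e (f i)).1), by simp, rfl⟩
        · exact ⟨Sum.inl (1, (e (f i)).2.1), by simp, rfl⟩
        · exact ⟨Sum.inl (2, (e (f i)).2.2), by simp, rfl⟩
      · exact ⟨Sum.inr (f i), by simp, trivial⟩
  · rintro ⟨V, hdisj, hcard, hcov⟩
    have key : ∀ i, ∃ j : Fin m, Sum.inr j ∈ V i ∧
        (∀ ω : Fin 3, Sum.inl (ω, comp3 ω (e j)) ∈ V i) := by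
      intro i
      obtain ⟨u, hu, hau⟩ := hcov i (Sum.inr (Sum.inr ()))
      obtain ⟨j, rfl⟩ : ∃ j, u = Sum.inr j := by
        cases u with
        | inl p => exact absurd hau (by rcases p with ⟨ω, a⟩; simp [auth3DM])
        | inr j => exact ⟨j, rfl⟩
      have hb : ∀ ω : Fin 3, ∃ b : Fin n, Sum.inl (ω, b) ∈ V i := by
        intro ω
        obtain ⟨u, hu, hau⟩ := hcov i (Sum.inr (Sum.inl ω))
        cases u with
        | inl p =>
          rcases p with ⟨ω', b⟩
          have : ω' = ω := hau
          exact ⟨b, this ▸ hu⟩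
        | inr j' => exact absurd hau (by simp [auth3DM])
      obtain ⟨b0, h0⟩ := hb 0
      obtain ⟨b1, h1⟩ := hb 1
      obtain ⟨b2, h2⟩ := hb 2
      have hsub : ({Sum.inl (0, b0), Sum.inl (1, b1), Sum.inl (2, b2), Sum.inr j} :
          Finset (Usr3DM n m)) ⊆ V i := by
        intro x hx
        simp only [Finset.mem_insert, Finset.mem_singleton] at hx
        rcases hx with rfl|rfl|rfl|rfl <;> assumption
      have hcard4 : ({Sum.inl (0, b0), Sum.inl (1, b1), Sum.inl (2, b2), Sum.inr j} :
          Finset (Usr3DM n m)).card = 4 := by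
        rw [Finset.card_insert_of_notMem (by simp [Fin.ext_iff]),
          Finset.card_insert_of_notMem (by simp [Fin.ext_iff]),
          Finset.card_insert_of_notMem (by simp), Finset.card_singleton]
      have hVeq : V i = ({Sum.inl (0, b0), Sum.inl (1, b1), Sum.inl (2, b2), Sum.inr j} :
          Finset (Usr3DM n m)) :=
        (Finset.eq_of_subset_of_card_le hsub (by rw [hcard4]; exact hcard i)).symm
      refine ⟨j, hu, ?_⟩
      intro ω
      obtain ⟨u, hu', hau'⟩ := hcov i (Sum.inl (ω, j))
      rw [hVeq] at hu' ⊢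
      simp only [Finset.mem_insert, Finset.mem_singleton] at hu'
      rcases hu' with rfl|rfl|rfl|rfl
      · obtain ⟨h1', h2'⟩ := hau'
        subst h1'; rw [h2']; simp
      · obtain ⟨h1', h2'⟩ := hau'
        subst h1'; rw [h2']; simp
      · obtain ⟨h1', h2'⟩ := hau'
        subst h1'; rw [h2']; simp
      · exact absurd rfl hau'
    choose f hf1 hf2 using key
    refine ⟨f, fun i j hij => ?_⟩
    have d := Finset.disjoint_left.mp (hdisj i j hij)
    have m0i := hf2 i 0; have m0j := hf2 j 0
    have m1i := hf2 i 1; have m1j := hf2 j 1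
    have m2i := hf2 i 2; have m2j := hf2 j 2
    simp only [comp3, if_pos rfl] at m0i m0j
    simp only [comp3, show (1:Fin 3) ≠ 0 by decide, if_neg, if_pos rfl, ite_false,
      ite_true] at m1i m1j
    simp only [comp3, show (2:Fin 3) ≠ 0 by decide, show (2:Fin 3) ≠ 1 by decide,
      if_neg, ite_false] at m2i m2j
    refine ⟨fun hEq => ?_, fun hEq => ?_, fun hEq => ?_⟩
    · exact d (hEq ▸ m0i) m0j
    · exact d (hEq ▸ m1i) m1j
    · exact d (hEq ▸ m2i) m2j
end

section
/- (Structural lemma from the hitting-set reduction.) In the instance constructed from a δ-Hitting Set instance: every set T ⊆ U with |T| ≤ δ+1 and N(T) ⊇ R satisfies T = {u^V_{i₁},…,u^V_{i_δ}, u^S_j} for some j ∈ [m], where S_j = {v_{i₁},…,v_{i_δ}}. In particular, the teams of size at most δ+1 covering all resources are in one-to-one correspondence with the sets S_j of the hitting set instance. -/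
/-- Users of the hitting-set reduction: `inl i` is `u^V_i`, `inr j` is `u^S_j`. -/
abbrev UsrHS (n m : ℕ) := Fin n ⊕ Fin m

/-- Resources of the hitting-set reduction: `inl Q` is `r^V_Q` for a
`(δ-1)`-element subset `Q` of `U^V`; `inr (inl (j, x))` is `p^j_x`;
`inr (inr ())` is `r^*`. -/
abbrev ResHS (n m δ : ℕ) :=
  {Q : Finset (Fin n) // Q.card = δ - 1} ⊕ ((Fin m × Fin δ) ⊕ Unit)

/-- The authorization policy of the hitting-set reduction, where `S j x` is the
`x`-th element of the set `S_j`. -/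
def authHS {n m δ : ℕ} (S : Fin m → Fin δ → Fin n) :
    UsrHS n m → ResHS n m δ → Prop
  | .inl i, .inl Q => i ∉ Q.val
  | .inl i, .inr (.inl (j, x)) => S j x = i
  | .inl _, .inr (.inr _) => False
  | .inr _, .inl _ => False
  | .inr j, .inr (.inl (j', _)) => j' ≠ j
  | .inr _, .inr (.inr _) => True

/-- Structural lemma of the hitting-set reduction: every set of at most `δ+1`
users covering all resources is `{u^V_{S_j[1]}, …, u^V_{S_j[δ]}, u^S_j}` for some `j`. -/
theorem hittingSet_team_structure {n m δ : ℕ} (hδ : 2 ≤ δ)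
    (S : Fin m → Fin δ → Fin n) (hinj : ∀ j, Function.Injective (S j))
    (T : Finset (UsrHS n m)) (hcard : T.card ≤ δ + 1)
    (hcov : ∀ r : ResHS n m δ, ∃ u ∈ T, authHS S u r) :
    ∃ j : Fin m,
      T = insert (Sum.inr j)
            ((Finset.univ : Finset (Fin δ)).image (fun x => Sum.inl (S j x))) := by
  -- some `inr j ∈ T` from covering `r*`
  obtain ⟨u, huT, hu⟩ := hcov (Sum.inr (Sum.inr ()))
  obtain (i | j) := u
  · exact absurd hu (by simp [authHS])
  refine ⟨j, ?_⟩
  -- `j` is the unique right element of `T`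
  have hδn : δ ≤ n := by
    simpa using Fintype.card_le_of_injective _ (hinj j)
  have huniq : ∀ j' : Fin m, Sum.inr j' ∈ T → j' = j := by
    by_contra h
    push_neg at h
    obtain ⟨j', hj'T, hj'⟩ := h
    -- T.toRight has ≥ 2 elements, so T.toLeft has ≤ δ - 1
    have h2 : 2 ≤ T.toRight.card := by
      have := Finset.one_lt_card.mpr ⟨j', Finset.mem_toRight.mpr hj'T, j, Finset.mem_toRight.mpr huT, hj'⟩
      omega
    have hL : T.toLeft.card ≤ δ - 1 := by
      have := Finset.card_toLeft_add_card_toRight (u := T)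
      omega
    obtain ⟨Q, hQsub, hQcard⟩ :=
      Finset.exists_superset_card_eq hL (by simpa using Nat.le_trans (Nat.sub_le δ 1) hδn)
    obtain ⟨u, huT', hu'⟩ := hcov (Sum.inl ⟨Q, hQcard⟩)
    obtain (i | j'') := u
    · exact hu' (hQsub (by simpa using huT'))
    · exact hu'
  -- every `p^j_x` is covered by `inl (S j x)`
  have hmem : ∀ x : Fin δ, Sum.inl (S j x) ∈ T := by
    intro x
    obtain ⟨u, huT', hu'⟩ := hcov (Sum.inr (Sum.inl (j, x)))
    obtain (i | j') := u
    · simp only [authHS] at hu'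
      rwa [hu']
    · exact absurd (huniq j' huT').symm hu'
  -- the claimed set is a subset of `T` of card `δ + 1`
  set E : Finset (UsrHS n m) :=
    insert (Sum.inr j) ((Finset.univ : Finset (Fin δ)).image fun x => Sum.inl (S j x)) with hE
  have hsub : E ⊆ T := by
    intro u hu'
    rw [hE, Finset.mem_insert] at hu'
    obtain rfl | hu' := hu'
    · exact huT
    · obtain ⟨x, _, rfl⟩ := Finset.mem_image.mp hu'
      exact hmem x
  have hEcard : E.card = δ + 1 := by
    rw [hE, Finset.card_insert_of_notMem (by simp), Finset.card_image_of_injective _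
      (fun a b hab => hinj j (by simpa using hab)), Finset.card_univ, Fintype.card_fin]
  exact (Finset.eq_of_subset_of_card_le hsub (hEcard ▸ hcard)).symm
end

section
/- (Equivalence in the hitting-set reduction.) Let (V, S = {S₁,…,S_m}, k) be a δ-Hitting Set instance. In the constructed instance with t = δ+1, d = 1, s = k: there exists a hitting set C ⊆ V with |C| ≤ k (i.e., C ∩ S_j ≠ ∅ for all j) if and only if there exists a blocker set B ⊆ U^V with |B| ≤ k, i.e., a set B of at most k users from U^V such that no T ⊆ U∖B with |T| ≤ δ+1 has N(T) ⊇ R. -/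
/-!
A hitting set `C` gives the blocker `B = U^V ∩ C`: a covering team must contain an `S`-user
`u^S_j` (for `r^*`), and if it contained two, at most `δ - 1` of its members would be `V`-users,
leaving the resource `r^V_Q` of a `(δ-1)`-set `Q` containing them uncovered. So the team has
the form `{u^S_j} ∪ V`-users, and the resource `p^j_x` with `S_j[x] ∈ C` can then only be
covered by the blocked user `u^V_{S_j[x]}`. Conversely, if a blocker `B` misses some `S_j`
entirely, the team `T_j = {u^S_j} ∪ {u^V_i : v_i ∈ S_j}` avoids `B` and covers every resource.
-/

open Finset

namespace HittingSetReduction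

variable {n m δ : ℕ} (S : Fin m → Fin δ → Fin n)

def IsCoveringTeam (T : Finset (UsrHS n m)) : Prop :=
  ∀ r : ResHS n m δ, ∃ u ∈ T, authHS S u r

def team (j : Fin m) : Finset (UsrHS n m) :=
  insert (.inr j) (univ.image fun x => .inl (S j x))

variable {S}

theorem IsCoveringTeam.exists_inr_mem {T : Finset (UsrHS n m)} (hT : IsCoveringTeam S T) :
    ∃ j, .inr j ∈ T := by
  obtain ⟨_ | j, hu, hauth⟩ := hT (.inr (.inr ()))
  · exact hauth.elim
  · exact ⟨j, hu⟩

theorem IsCoveringTeam.lt_card_toLeft {T : Finset (UsrHS n m)} (hT : IsCoveringTeam S T)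
    (hn : δ - 1 ≤ n) : δ - 1 < #T.toLeft := by
  by_contra! hle
  obtain ⟨Q, hTQ, -, hQ⟩ := exists_subsuperset_card_eq (subset_univ T.toLeft) hle
    (by simpa using hn)
  obtain ⟨_ | _, hu, hauth⟩ := hT (.inl ⟨Q, hQ⟩)
  · exact hauth (hTQ (mem_toLeft.mpr hu))
  · exact hauth

theorem IsCoveringTeam.card_toRight_le_one {T : Finset (UsrHS n m)} (hT : IsCoveringTeam S T)
    (hn : δ - 1 ≤ n) (hcard : #T ≤ δ + 1) : #T.toRight ≤ 1 := by
  have := hT.lt_card_toLeft hn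
  have := card_toLeft_add_card_toRight (u := T)
  omega

theorem not_isCoveringTeam_of_disjoint {C : Finset (Fin n)} (hC : ∀ j, ∃ x, S j x ∈ C)
    (hinj : ∀ j, Function.Injective (S j)) {T : Finset (UsrHS n m)}
    (hdisj : Disjoint T (C.image .inl)) (hcard : #T ≤ δ + 1) : ¬ IsCoveringTeam S T := by
  intro hT
  obtain ⟨j₀, hj₀⟩ := hT.exists_inr_mem
  have hn : δ - 1 ≤ n := by have := Fin.le_of_injective _ (hinj j₀); omega
  obtain ⟨x, hx⟩ := hC j₀
  obtain ⟨_ | j, hu, hauth⟩ := hT (.inr (.inl (j₀, x)))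
  · exact disjoint_left.mp hdisj hu (mem_image_of_mem _ (hauth ▸ hx))
  · refine hauth (card_le_one.mp (hT.card_toRight_le_one hn hcard) _ ?_ _ ?_) <;>
      simpa [mem_toRight]

theorem card_team_le (j : Fin m) : #(team S j) ≤ δ + 1 :=
  calc #(team S j) ≤ #(univ.image fun x => (.inl (S j x) : UsrHS n m)) + 1 :=
        card_insert_le _ _
    _ ≤ δ + 1 := by gcongr; exact card_image_le.trans (by simp)

theorem isCoveringTeam_team (hδ : 0 < δ) {j : Fin m} (hinj : Function.Injective (S j)) :
    IsCoveringTeam S (team S j) := by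
  have inl_mem (x : Fin δ) : .inl (S j x) ∈ team S j :=
    mem_insert_of_mem (mem_image_of_mem _ (mem_univ x))
  rintro (⟨Q, hQ⟩ | ⟨⟨j', x⟩ | ⟨⟩⟩)
  · have hnot : ¬ univ.image (S j) ⊆ Q := fun hsub => by
      have := card_le_card hsub
      rw [card_image_of_injective _ hinj, card_univ, Fintype.card_fin, hQ] at this
      omega
    obtain ⟨_, hi, hiQ⟩ := not_subset.mp hnot
    obtain ⟨x, -, rfl⟩ := mem_image.mp hi
    exact ⟨_, inl_mem x, hiQ⟩
  · by_cases hj : j' = j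
    · subst hj
      exact ⟨_, inl_mem x, rfl⟩
    · exact ⟨.inr j, mem_insert_self _ _, hj⟩
  · exact ⟨.inr j, mem_insert_self _ _, trivial⟩

theorem disjoint_team {B : Finset (UsrHS n m)} (hB : ∀ u ∈ B, ∃ i, u = .inl i) {j : Fin m}
    (hmiss : ∀ x, S j x ∉ B.toLeft) : Disjoint (team S j) B := by
  refine disjoint_left.mpr fun u hu huB => ?_
  rcases mem_insert.mp hu with rfl | hu
  · obtain ⟨_, ⟨⟩⟩ := hB _ huB
  · obtain ⟨x, -, rfl⟩ := mem_image.mp hu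
    exact hmiss x (mem_toLeft.mpr huB)

end HittingSetReduction

/-- Equivalence in the hitting-set reduction: a hitting set of size at most `k`
exists iff the constructed instance has a blocker set `B ⊆ U^V` of size at most
`k`, i.e. no team of size at most `δ+1` avoiding `B` covers all resources. -/
theorem hittingSet_reduction_correct {n m δ k : ℕ} (hδ : 2 ≤ δ)
    (S : Fin m → Fin δ → Fin n) (hinj : ∀ j, Function.Injective (S j)) :
    (∃ C : Finset (Fin n), C.card ≤ k ∧ ∀ j : Fin m, ∃ x : Fin δ, S j x ∈ C)
    ↔ (∃ B : Finset (UsrHS n m), B.card ≤ k ∧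
        (∀ u ∈ B, ∃ i : Fin n, u = Sum.inl i) ∧
        ¬ ∃ T : Finset (UsrHS n m), Disjoint T B ∧ T.card ≤ δ + 1 ∧
            ∀ r : ResHS n m δ, ∃ u ∈ T, authHS S u r) := by
  constructor
  · rintro ⟨C, hCk, hC⟩
    refine ⟨C.image Sum.inl, card_image_le.trans hCk, by simp, ?_⟩
    rintro ⟨T, hdisj, hcard, hT⟩
    exact HittingSetReduction.not_isCoveringTeam_of_disjoint hC hinj hdisj hcard hT
  · rintro ⟨B, hBk, hBV, hblock⟩
    refine ⟨B.toLeft, card_toLeft_le.trans hBk, fun j => ?_⟩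
    by_contra! hmiss
    open HittingSetReduction in
    exact hblock ⟨team S j, disjoint_team hBV hmiss, card_team_le j,
      isCoveringTeam_team (by omega) (hinj j)⟩
end

section
/- (Configuration encoding of sets of teams.) Let U be a finite set of users, P a finite set of resources, N : U → powerset(P), d ≥ 1, t ≥ 1. For N' ⊆ P let U_{N'} = {u ∈ U : N(u) = N'}, and let 𝒞 be the set of all families c = {N₁,…,N_b} with b ≤ t, Nᵢ ⊆ P, and ⋃ᵢ Nᵢ = P. Then there exist d pairwise disjoint sets V₁,…,V_d ⊆ U with |Vᵢ| ≤ t and N(Vᵢ) ⊇ P for all i, if and only if there exists an assignment x : 𝒞 → ℕ with ∑_{c∈𝒞} x(c) = d and, for every N' ⊆ P, ∑_{c ∈ 𝒞 : N' ∈ c} x(c) ≤ |U_{N'}|. -/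
/-!
A family of teams yields the configurations `(V i).image Nf`; counting teams by their
configuration gives the multiplicities, and since the teams are disjoint, the teams whose
configuration contains a type `N'` use distinct users of type `N'`. Conversely, unfolding the
multiplicities lists `d` configurations; for each type `N'` the configurations containing it
can be injected into the users of type `N'`, and taking one user per type of each
configuration gives disjoint teams.
-/

open Finset Function

theorem exists_fin_fiber_card_eq {α : Type*} [DecidableEq α] (S : Finset α) (x : α → ℕ) :
    ∃ f : Fin (∑ c ∈ S, x c) → α, (∀ i, f i ∈ S) ∧ ∀ c ∈ S, #{i | f i = c} = x c := by
  set m : Multiset α := ∑ c ∈ S, Multiset.replicate (x c) c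
  have hm : m.toList.length = ∑ c ∈ S, x c := by simp [m, Multiset.card_sum]
  let v : List.Vector α (∑ c ∈ S, x c) := ⟨m.toList, hm⟩
  refine ⟨v.get, fun i => ?_, fun c hc => ?_⟩
  · have hi : v.get i ∈ m := Multiset.mem_toList.1 (List.get_mem _ _)
    obtain ⟨c, hc, hic⟩ := Multiset.mem_sum.1 hi
    rwa [Multiset.eq_of_mem_replicate hic]
  · rw [Fin.card_filter_univ_eq_vector_get_eq_count, ← Multiset.coe_count]
    change Multiset.count c ↑m.toList = x c
    rw [Multiset.coe_toList, Multiset.count_sum']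
    simp [Multiset.count_replicate, hc]

theorem card_filter_mem_image_le {ι U β : Type*} [Fintype ι] [Fintype U] [DecidableEq β]
    {V : ι → Finset U} (hV : Pairwise (Disjoint on V)) (g : U → β) (b : β) :
    #{i | b ∈ (V i).image g} ≤ #{u | g u = b} := by
  have hrep : ∀ i : {i // b ∈ (V i).image g}, ∃ u ∈ V i, g u = b := fun i => mem_image.1 i.2
  choose φ hφV hφg using hrep
  rw [← Fintype.card_subtype, ← Fintype.card_subtype]
  refine Fintype.card_le_of_injective (fun i => ⟨φ i, hφg i⟩) fun i j hij => Subtype.ext ?_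
  have hφ : φ i = φ j := congrArg Subtype.val hij
  exact hV.eq (not_disjoint_iff.2 ⟨φ i, hφV i, hφ ▸ hφV j⟩)

theorem exists_pairwise_disjoint_image_eq {ι U β : Type*} [Fintype ι] [Fintype U] [DecidableEq β]
    (g : U → β) (f : ι → Finset β) (h : ∀ b, #{i | b ∈ f i} ≤ #{u | g u = b}) :
    ∃ V : ι → Finset U,
      Pairwise (Disjoint on V) ∧ ∀ i, (V i).image g = f i ∧ #(V i) ≤ #(f i) := by
  classical
  have e : ∀ b, {i // b ∈ f i} ↪ {u // g u = b} := fun b =>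
    (Embedding.nonempty_of_card_le (by simpa only [Fintype.card_subtype] using h b)).some
  refine ⟨fun i => (f i).attach.image fun b => (e b.1 ⟨i, b.2⟩).1, fun i j hij => ?_,
    fun i => ⟨?_, ?_⟩⟩
  · rw [onFun, disjoint_left]
    simp only [mem_image, mem_attach, true_and, not_exists]
    rintro u ⟨⟨b, hb⟩, rfl⟩ ⟨b', hb'⟩ hu
    have hbb : b' = b := by rw [← (e b' ⟨j, hb'⟩).2, ← (e b ⟨i, hb⟩).2, hu]
    subst hbb
    exact hij (congrArg Subtype.val ((e b').injective (Subtype.ext hu)).symm)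
  · rw [image_image]
    conv_rhs => rw [← attach_image_val (s := f i)]
    exact image_congr fun b _ => (e b.1 ⟨i, b.2⟩).2
  · exact card_image_le.trans card_attach.le

theorem sup_image_id_eq_univ_iff {U P : Type*} [Fintype P] [DecidableEq P] (N : U → Finset P)
    (V : Finset U) : (V.image N).sup id = univ ↔ ∀ r, ∃ u ∈ V, r ∈ N u := by
  simp [sup_image, eq_univ_iff_forall, mem_sup]

theorem configuration_encoding_general {U P : Type*} [Fintype U]
    [Fintype P] [DecidableEq P]
    (Nf : U → Finset P) (d t : ℕ) :
    (∃ V : Fin d → Finset U,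
        (∀ i j, i ≠ j → Disjoint (V i) (V j)) ∧
        (∀ i, (V i).card ≤ t) ∧
        (∀ i, ∀ r : P, ∃ u ∈ V i, r ∈ Nf u))
    ↔ (∃ x : Finset (Finset P) → ℕ,
        (∑ c ∈ Finset.univ.filter
            (fun c : Finset (Finset P) => c.card ≤ t ∧ c.sup id = Finset.univ),
            x c) = d ∧
        ∀ N' : Finset P,
          (∑ c ∈ Finset.univ.filter
              (fun c : Finset (Finset P) =>
                (c.card ≤ t ∧ c.sup id = Finset.univ) ∧ N' ∈ c),
              x c) ≤ (Finset.univ.filter (fun u => Nf u = N')).card) := by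
  constructor
  · rintro ⟨V, hdisj, hcard, hcov⟩
    have hconf : ∀ i, #((V i).image Nf) ≤ t ∧ ((V i).image Nf).sup id = univ := fun i =>
      ⟨card_image_le.trans (hcard i), (sup_image_id_eq_univ_iff Nf (V i)).2 (hcov i)⟩
    refine ⟨fun c => #{i | (V i).image Nf = c}, ?_, fun N' => ?_⟩
    · simp [sum_card_fiberwise_eq_card_filter, hconf]
    · simpa [sum_card_fiberwise_eq_card_filter, hconf] using
        card_filter_mem_image_le (fun i j => hdisj i j) Nf N'
  · rintro ⟨x, rfl, hx⟩
    obtain ⟨f, hfS, hfx⟩ := exists_fin_fiber_card_eq _ x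
    have hfN : ∀ N', #{i | N' ∈ f i} ≤ #{u | Nf u = N'} := by
      intro N'
      refine le_of_eq_of_le ?_ (hx N')
      rw [← filter_filter, ← sum_congr rfl fun c hc => hfx c (filter_subset _ _ hc),
        sum_card_fiberwise_eq_card_filter]
      congr 1
      exact filter_congr fun i _ => by simp [mem_filter.1 (hfS i)]
    obtain ⟨V, hdisj, hVf⟩ := exists_pairwise_disjoint_image_eq Nf f hfN
    refine ⟨V, fun i j hij => hdisj hij, fun i => ?_, fun i => ?_⟩
    · exact (hVf i).2.trans (mem_filter.1 (hfS i)).2.1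
    · rw [← sup_image_id_eq_univ_iff, (hVf i).1]
      exact (mem_filter.1 (hfS i)).2.2

/-- Configuration encoding of sets of teams: `d` pairwise disjoint teams of size at
most `t` each covering all resources exist iff configurations (sets of at most `t`
neighborhood types whose union is everything) can be assigned multiplicities
summing to `d` without exceeding, for any neighborhood type `N'`, the number of
users of type `N'`. -/
theorem configuration_encoding {U P : Type*} [Fintype U] [DecidableEq U]
    [Fintype P] [DecidableEq P]
    (Nf : U → Finset P) (d t : ℕ) (hd : 1 ≤ d) (ht : 1 ≤ t) :
    (∃ V : Fin d → Finset U,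
        (∀ i j, i ≠ j → Disjoint (V i) (V j)) ∧
        (∀ i, (V i).card ≤ t) ∧
        (∀ i, ∀ r : P, ∃ u ∈ V i, r ∈ Nf u))
    ↔ (∃ x : Finset (Finset P) → ℕ,
        (∑ c ∈ Finset.univ.filter
            (fun c : Finset (Finset P) => c.card ≤ t ∧ c.sup id = Finset.univ),
            x c) = d ∧
        ∀ N' : Finset P,
          (∑ c ∈ Finset.univ.filter
              (fun c : Finset (Finset P) =>
                (c.card ≤ t ∧ c.sup id = Finset.univ) ∧ N' ∈ c),
              x c) ≤ (Finset.univ.filter (fun u => Nf u = N')).card) :=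
  configuration_encoding_general Nf d t
end
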